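/- Let $a, b \in \mathbb{R}^n$ be vectors with positive entries, where $a$ is sorted so that $a_i \geq a_{i+1}$ for all $i$, and let $\pi$ be a permutation of $[n]$ such that $b_{\pi(i)} \geq b_{\pi(i+1)}$ for all $i$. If $|a_i - b_i| \leq \epsilon a_i$ for all $i \in [n]$, then $|a_i - b_{\pi(i)}| \leq \epsilon a_i$ for all $i \in [n]$. -/

import Mathlib

/-! Pigeonhole: an injection of a linear order into itself cannot map all of `Iic i` into
`Iio i`, so some `j ≤ i` has `i ≤ π j`. Hence `b (π i) ≤ b (π j) ≤ (1 + ε) a (π j) ≤ (1 + ε) a i`,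
and for `ε ≤ 1` the lower bound is the same argument applied to `π⁻¹` (for `ε > 1` it is
negative). -/

open Finset in
theorem exists_le_and_le_apply_of_injective {α : Type*} [LinearOrder α] [LocallyFiniteOrderBot α]
    {f : α → α} (hf : f.Injective) (i : α) : ∃ j ≤ i, i ≤ f j := by
  by_contra! h
  have hcard : #(Iic i) ≤ #(Iio i) :=
    card_le_card_of_injOn f (fun j hj => mem_Iio.2 (h j (mem_Iic.1 hj))) hf.injOn
  rw [Iic_eq_cons_Iio, card_cons] at hcard
  omega

section
variable {α β : Type*} [LinearOrder α] [LocallyFiniteOrderBot α] [Preorder β]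
  {σ : Equiv.Perm α} {b : α → β}

theorem apply_perm_le_of_le_antitone {u : α → β} (hu : Antitone u) (hb : Antitone (b ∘ σ))
    (hbu : ∀ k, b k ≤ u k) (i : α) : b (σ i) ≤ u i := by
  obtain ⟨j, hji, hiσj⟩ := exists_le_and_le_apply_of_injective σ.injective i
  calc b (σ i) ≤ b (σ j) := hb hji
    _ ≤ u (σ j) := hbu _
    _ ≤ u i := hu hiσj

theorem le_apply_perm_of_antitone_le {l : α → β} (hl : Antitone l) (hb : Antitone (b ∘ σ))
    (hlb : ∀ k, l k ≤ b k) (i : α) : l i ≤ b (σ i) := by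
  obtain ⟨j, hji, hiσj⟩ := exists_le_and_le_apply_of_injective σ.symm.injective i
  calc l i ≤ l j := hl hji
    _ ≤ b j := hlb _
    _ = b (σ (σ.symm j)) := by rw [σ.apply_symm_apply]
    _ ≤ b (σ i) := hb hiσj

end

/-- If `a` is sorted nonincreasing, `b ∘ π` is nonincreasing, all entries positive, and
`b` entrywise multiplicatively approximates `a`, then the sorted version of `b` also
entrywise approximates `a`. -/
theorem sorted_approx_preserved (n : ℕ) (ε : ℝ) (hε : 0 ≤ ε)
    (a b : Fin n → ℝ) (ha_pos : ∀ i, 0 < a i) (hb_pos : ∀ i, 0 < b i)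
    (ha_sorted : ∀ i j : Fin n, i ≤ j → a j ≤ a i)
    (π : Equiv.Perm (Fin n))
    (hb_sorted : ∀ i j : Fin n, i ≤ j → b (π j) ≤ b (π i))
    (happrox : ∀ i, |a i - b i| ≤ ε * a i) :
    ∀ i, |a i - b (π i)| ≤ ε * a i := by
  have ha : Antitone a := ha_sorted
  have hbπ : Antitone (b ∘ π) := hb_sorted
  intro i
  have hband k : (1 - ε) * a k ≤ b k ∧ b k ≤ (1 + ε) * a k := by
    constructor <;> linarith [abs_le.1 (happrox k)]
  have hub : b (π i) ≤ (1 + ε) * a i :=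
    apply_perm_le_of_le_antitone (ha.const_mul (by linarith)) hbπ
      (fun k => (hband k).2) i
  have hlb : (1 - ε) * a i ≤ b (π i) := by
    rcases le_or_gt ε 1 with hε1 | hε1
    · exact le_apply_perm_of_antitone_le (ha.const_mul (by linarith)) hbπ
        (fun k => (hband k).1) i
    · exact (mul_nonpos_of_nonpos_of_nonneg (by linarith) (ha_pos i).le).trans (hb_pos _).le
  rw [abs_le]
  constructor <;> linarith
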